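/- arXiv:2410.20422 — 9 statements merged into one kernel-verified Lean document; each statement's English description precedes it below -/
import Mathlib

section
/- Let V be a real vector space and let I₁, I₂ be linear endomorphisms of V ⊕ V* with I₁² = -Id and I₂² = -Id, satisfying I₁I₂ + I₂I₁ = 2p·Id for a real number p with |p| < 1. Then K := (1/(2√(1-p²)))·(I₁I₂ - I₂I₁) satisfies K² = -Id and anti-commutes with both I₁ and I₂. -/
/-! If `a² = b² = -1`, the commutator `[a, b]` anticommutes with `a` and with `b`, and
`[a, b]² = {a, b}² - 4` because `ab·ba = ba·ab = 1`. For `{a, b} = 2p` this is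
`-4(1 - p²)`, a negative scalar when `|p| < 1`, so the rescaled commutator squares to `-1`. -/

section Commutator

variable {R A : Type*} [CommRing R] [Ring A] [Algebra R A] (a b : A)

theorem commutator_mul_left_eq_neg (ha : a * a = -1) :
    (a * b - b * a) * a = -(a * (a * b - b * a)) := by
  have haab : a * a * b = -b := by rw [ha, neg_one_mul]
  have hbaa : b * (a * a) = -b := by rw [ha, mul_neg_one]
  calc (a * b - b * a) * a = a * b * a - b * (a * a) := by noncomm_ring
    _ = -(a * a * b - a * b * a) := by rw [haab, hbaa]; abel
    _ = -(a * (a * b - b * a)) := by noncomm_ring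

theorem commutator_mul_right_eq_neg (hb : b * b = -1) :
    (a * b - b * a) * b = -(b * (a * b - b * a)) := by
  rw [← neg_sub (b * a) (a * b), neg_mul, mul_neg, neg_inj]
  exact commutator_mul_left_eq_neg b a hb

theorem commutator_mul_self_eq_anticommutator_mul_self_sub_four
    (ha : a * a = -1) (hb : b * b = -1) :
    (a * b - b * a) * (a * b - b * a) = (a * b + b * a) * (a * b + b * a) - 4 := by
  have habba : a * (b * b) * a = 1 := by rw [hb, mul_neg_one, neg_mul, ha, neg_neg]
  have hbaab : b * (a * a) * b = 1 := by rw [ha, mul_neg_one, neg_mul, hb, neg_neg]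
  calc (a * b - b * a) * (a * b - b * a)
      = (a * b + b * a) * (a * b + b * a) - 2 * (a * (b * b) * a + b * (a * a) * b) := by
        noncomm_ring
    _ = (a * b + b * a) * (a * b + b * a) - 4 := by rw [habba, hbaab]; norm_num

theorem commutator_mul_self_of_anticommutator_eq_smul_one
    (ha : a * a = -1) (hb : b * b = -1) {t : R} (hab : a * b + b * a = t • 1) :
    (a * b - b * a) * (a * b - b * a) = (t ^ 2 - 4) • (1 : A) := by
  rw [commutator_mul_self_eq_anticommutator_mul_self_sub_four a b ha hb, hab, smul_mul_smul,
    one_mul, sub_smul, ← pow_two, ofNat_smul_eq_nsmul, nsmul_eq_mul, mul_one]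
  norm_num

end Commutator

theorem stmt0_general {V : Type*} [AddCommGroup V] [Module ℝ V]
    (I₁ I₂ : Module.End ℝ (V × Module.Dual ℝ V))
    (h1 : I₁ * I₁ = -1) (h2 : I₂ * I₂ = -1)
    (p : ℝ) (hp : |p| < 1)
    (hac : I₁ * I₂ + I₂ * I₁
      = (2 * p) • (1 : Module.End ℝ (V × Module.Dual ℝ V)))
    (K : Module.End ℝ (V × Module.Dual ℝ V))
    (hK : K = (1 / (2 * Real.sqrt (1 - p ^ 2))) • (I₁ * I₂ - I₂ * I₁)) :
    K * K = -1 ∧ K * I₁ = -(I₁ * K) ∧ K * I₂ = -(I₂ * K) := by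
  have hpos : 0 < 1 - p ^ 2 := by nlinarith [sq_abs p, abs_nonneg p]
  have hc : (1 / (2 * Real.sqrt (1 - p ^ 2))) * (1 / (2 * Real.sqrt (1 - p ^ 2)))
      * ((2 * p) ^ 2 - 4) = -1 := by
    have hsq := Real.mul_self_sqrt hpos.le
    have hne : Real.sqrt (1 - p ^ 2) ≠ 0 := (Real.sqrt_pos.mpr hpos).ne'
    field_simp
    nlinarith [hsq]
  subst hK
  refine ⟨?_, ?_, ?_⟩
  · rw [smul_mul_smul, commutator_mul_self_of_anticommutator_eq_smul_one I₁ I₂ h1 h2 hac,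
      smul_smul, hc]
    exact neg_one_smul ℝ (1 : Module.End ℝ (V × Module.Dual ℝ V))
  · rw [smul_mul_assoc, mul_smul_comm, commutator_mul_left_eq_neg I₁ I₂ h1, smul_neg]
  · rw [smul_mul_assoc, mul_smul_comm, commutator_mul_right_eq_neg I₁ I₂ h2, smul_neg]

/-- If `I₁, I₂` are complex structures on `V ⊕ V*` with
`I₁I₂ + I₂I₁ = 2p·Id`, `|p| < 1`, then `K = (1/(2√(1-p²)))(I₁I₂ - I₂I₁)`
squares to `-Id` and anti-commutes with `I₁` and `I₂`. -/
theorem stmt0 {V : Type*} [AddCommGroup V] [Module ℝ V] [FiniteDimensional ℝ V]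
    (I₁ I₂ : Module.End ℝ (V × Module.Dual ℝ V))
    (h1 : I₁ * I₁ = -1) (h2 : I₂ * I₂ = -1)
    (p : ℝ) (hp : |p| < 1)
    (hac : I₁ * I₂ + I₂ * I₁
      = (2 * p) • (1 : Module.End ℝ (V × Module.Dual ℝ V)))
    (K : Module.End ℝ (V × Module.Dual ℝ V))
    (hK : K = (1 / (2 * Real.sqrt (1 - p ^ 2))) • (I₁ * I₂ - I₂ * I₁)) :
    K * K = -1 ∧ K * I₁ = -(I₁ * K) ∧ K * I₂ = -(I₂ * K) :=
  stmt0_general I₁ I₂ h1 h2 p hp hac K hK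
end

section
/- Let V be a real vector space, I₁, I₂ complex structures on V ⊕ V* (i.e. squaring to -Id) with I₁I₂ + I₂I₁ = 2p·Id, |p| < 1, and suppose both are compatible with the canonical split pairing ⟨X+ξ, Y+η⟩ = ½(ξ(Y)+η(X)) (i.e. ⟨Iᵢv, Iᵢw⟩ = ⟨v,w⟩ for all v,w). Then K := (1/(2√(1-p²)))·(I₁I₂ - I₂I₁) is also compatible with the pairing: ⟨Kv, Kw⟩ = ⟨v,w⟩ for all v, w. -/
/-!
For an endomorphism `f` with `f² = -1`, being orthogonal for a bilinear form is the same as being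
skew-adjoint. So `I₁`, `I₂` are skew-adjoint, hence so is their commutator and its multiple `K`.
Since `I₁I₂ · I₂I₁ = I₂I₁ · I₁I₂ = 1`, the commutator squares to
`(I₁I₂ + I₂I₁)² - 4 = 4(p² - 1)`, so the normalisation makes `K² = -1`, and `K` is orthogonal.
-/

open LinearMap (BilinForm)

noncomputable def splitPairing (𝕜 V : Type*) [Field 𝕜] [AddCommGroup V] [Module 𝕜 V] :
    BilinForm 𝕜 (V × Module.Dual 𝕜 V) :=
  (2⁻¹ : 𝕜) • (LinearMap.dualProd 𝕜 V).compl₁₂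
    (LinearEquiv.prodComm 𝕜 V (Module.Dual 𝕜 V)).toLinearMap
    (LinearEquiv.prodComm 𝕜 V (Module.Dual 𝕜 V)).toLinearMap

theorem splitPairing_apply {𝕜 V : Type*} [Field 𝕜] [AddCommGroup V] [Module 𝕜 V]
    (v w : V × Module.Dual 𝕜 V) : splitPairing 𝕜 V v w = (v.2 w.1 + w.2 v.1) / 2 := by
  simp [splitPairing, LinearMap.dualProd]
  ring

namespace LinearMap

variable {R M : Type*} [CommRing R] [AddCommGroup M] [Module R M] {B : BilinForm R M}
  {f : Module.End R M}

theorem IsOrthogonal.isSkewAdjoint_of_mul_self_eq_neg_one (hf : B.IsOrthogonal f)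
    (hf2 : f * f = -1) : B.IsSkewAdjoint f := by
  intro x y
  have hy : f (f (-y)) = y := by simp [← Module.End.mul_apply, hf2]
  rw [← hy, hf, hy, map_neg]
  rfl

theorem IsSkewAdjoint.isOrthogonal_of_mul_self_eq_neg_one (hf : B.IsSkewAdjoint f)
    (hf2 : f * f = -1) : B.IsOrthogonal f := by
  intro x y
  rw [hf x (f y)]
  simp [← Module.End.mul_apply, hf2]

end LinearMap

theorem commutator_mul_self_eq_of_anticommutator {R A : Type*} [CommRing R] [Ring A] [Algebra R A]
    {a b : A} (ha : a * a = -1) (hb : b * b = -1) {c : R} (hab : a * b + b * a = c • 1) :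
    (a * b - b * a) * (a * b - b * a) = (c ^ 2 - 4) • 1 := by
  have habba : a * b * (b * a) = 1 := by rw [mul_assoc, ← mul_assoc b, hb]; simp [ha]
  have hbaab : b * a * (a * b) = 1 := by rw [mul_assoc, ← mul_assoc a, ha]; simp [hb]
  calc (a * b - b * a) * (a * b - b * a)
      = (a * b + b * a) * (a * b + b * a) - 2 * (a * b * (b * a)) - 2 * (b * a * (a * b)) := by
        noncomm_ring
    _ = (c ^ 2 - 4) • 1 := by
        simp only [hab, habba, hbaab, Algebra.smul_def, mul_one, map_sub, map_ofNat, sq]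
        norm_num [sub_sub]

theorem normalized_commutator_mul_self_eq_neg_one {A : Type*} [Ring A] [Algebra ℝ A] {a b : A}
    (ha : a * a = -1) (hb : b * b = -1) {p : ℝ} (hp : |p| < 1)
    (hab : a * b + b * a = (2 * p) • 1) :
    ((1 / (2 * √(1 - p ^ 2))) • (a * b - b * a)) * ((1 / (2 * √(1 - p ^ 2))) • (a * b - b * a))
      = -1 := by
  have hp2 : 0 < 1 - p ^ 2 := by nlinarith [abs_lt.mp hp]
  have hs : √(1 - p ^ 2) ^ 2 = 1 - p ^ 2 := Real.sq_sqrt hp2.le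
  have hs0 : √(1 - p ^ 2) ≠ 0 := (Real.sqrt_pos.mpr hp2).ne'
  have hscalar : 1 / (2 * √(1 - p ^ 2)) * (1 / (2 * √(1 - p ^ 2))) * ((2 * p) ^ 2 - 4) = -1 := by
    field_simp
    linear_combination 4 * hs
  rw [smul_mul_smul_comm, commutator_mul_self_eq_of_anticommutator ha hb hab, smul_smul, hscalar,
    neg_one_smul]

open LinearMap in
theorem stmt1_general {V : Type*} [AddCommGroup V] [Module ℝ V]
    (pair : V × Module.Dual ℝ V → V × Module.Dual ℝ V → ℝ)
    (hpair : ∀ v w : V × Module.Dual ℝ V, pair v w = (v.2 w.1 + w.2 v.1) / 2)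
    (I₁ I₂ : Module.End ℝ (V × Module.Dual ℝ V))
    (h1 : I₁ * I₁ = -1) (h2 : I₂ * I₂ = -1)
    (hcomp1 : ∀ v w, pair (I₁ v) (I₁ w) = pair v w)
    (hcomp2 : ∀ v w, pair (I₂ v) (I₂ w) = pair v w)
    (p : ℝ) (hp : |p| < 1)
    (hac : I₁ * I₂ + I₂ * I₁
      = (2 * p) • (1 : Module.End ℝ (V × Module.Dual ℝ V)))
    (K : Module.End ℝ (V × Module.Dual ℝ V))
    (hK : K = (1 / (2 * Real.sqrt (1 - p ^ 2))) • (I₁ * I₂ - I₂ * I₁)) :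
    ∀ v w, pair (K v) (K w) = pair v w := by
  obtain rfl : pair = fun v w ↦ splitPairing ℝ V v w := by
    funext v w
    rw [hpair, splitPairing_apply]
  have hskew₁ := IsOrthogonal.isSkewAdjoint_of_mul_self_eq_neg_one hcomp1 h1
  have hskew₂ := IsOrthogonal.isSkewAdjoint_of_mul_self_eq_neg_one hcomp2 h2
  have hskew : (splitPairing ℝ V).IsSkewAdjoint K := by
    rw [← mem_skewAdjointSubmodule, hK]
    exact Submodule.smul_mem _ _ (BilinForm.isSkewAdjoint_bracket _
      ((mem_skewAdjointSubmodule _).mpr hskew₁) ((mem_skewAdjointSubmodule _).mpr hskew₂))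
  have hsq : K * K = -1 := by
    rw [hK]
    exact normalized_commutator_mul_self_eq_neg_one (a := I₁) (b := I₂) h1 h2 hp hac
  exact hskew.isOrthogonal_of_mul_self_eq_neg_one hsq

/-- If `I₁, I₂` are complex structures on `V ⊕ V*` compatible with the
canonical split pairing `⟨(X,ξ),(Y,η)⟩ = ½(ξ(Y)+η(X))` and `I₁I₂ + I₂I₁ = 2p·Id` with
`|p| < 1`, then `K = (1/(2√(1-p²)))(I₁I₂ - I₂I₁)` is also compatible with the pairing. -/
theorem stmt1 {V : Type*} [AddCommGroup V] [Module ℝ V] [FiniteDimensional ℝ V]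
    (pair : V × Module.Dual ℝ V → V × Module.Dual ℝ V → ℝ)
    (hpair : ∀ v w : V × Module.Dual ℝ V, pair v w = (v.2 w.1 + w.2 v.1) / 2)
    (I₁ I₂ : Module.End ℝ (V × Module.Dual ℝ V))
    (h1 : I₁ * I₁ = -1) (h2 : I₂ * I₂ = -1)
    (hcomp1 : ∀ v w, pair (I₁ v) (I₁ w) = pair v w)
    (hcomp2 : ∀ v w, pair (I₂ v) (I₂ w) = pair v w)
    (p : ℝ) (hp : |p| < 1)
    (hac : I₁ * I₂ + I₂ * I₁
      = (2 * p) • (1 : Module.End ℝ (V × Module.Dual ℝ V)))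
    (K : Module.End ℝ (V × Module.Dual ℝ V))
    (hK : K = (1 / (2 * Real.sqrt (1 - p ^ 2))) • (I₁ * I₂ - I₂ * I₁)) :
    ∀ v w, pair (K v) (K w) = pair v w :=
  stmt1_general pair hpair I₁ I₂ h1 h2 hcomp1 hcomp2 p hp hac K hK
end

section
/- Let ω₁, ω₂ be symplectic forms on V, B skew-symmetric, and suppose the generalized complex structures I₁ = [[0,-ω₁⁻¹],[ω₁,0]] and I₂ = [[ω₂⁻¹B, -ω₂⁻¹],[ω₂ + Bω₂⁻¹B, -Bω₂⁻¹]] satisfy I₁I₂ + I₂I₁ = 2p·Id. Then with A = Bω₂⁻¹ and D = ω₁ω₂⁻¹ + p·Id (endomorphisms of V*), one has AD = DA and A² + D² = (p² - 1)·Id. -/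
noncomputable section

variable {V : Type*} [AddCommGroup V] [Module ℝ V]

/-- The endomorphism of `V ⊕ V*` given in block-matrix form `[[a, b], [c, d]]`,
where `a : V → V`, `b : V* → V`, `c : V → V*`, `d : V* → V*`. -/
def blk (a : V →ₗ[ℝ] V) (b : Module.Dual ℝ V →ₗ[ℝ] V)
    (c : V →ₗ[ℝ] Module.Dual ℝ V)
    (d : Module.Dual ℝ V →ₗ[ℝ] Module.Dual ℝ V) :
    Module.End ℝ (V × Module.Dual ℝ V) :=
  LinearMap.prod
    (a ∘ₗ LinearMap.fst ℝ V (Module.Dual ℝ V) + b ∘ₗ LinearMap.snd ℝ V (Module.Dual ℝ V))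
    (c ∘ₗ LinearMap.fst ℝ V (Module.Dual ℝ V) + d ∘ₗ LinearMap.snd ℝ V (Module.Dual ℝ V))

/-- If `I₁ = [[0,-ω₁⁻¹],[ω₁,0]]` and
`I₂ = [[ω₂⁻¹B, -ω₂⁻¹],[ω₂ + Bω₂⁻¹B, -Bω₂⁻¹]]` satisfy `I₁I₂ + I₂I₁ = 2p·Id`, then
`A = Bω₂⁻¹` and `D = ω₁ω₂⁻¹ + p·Id` commute and satisfy `A² + D² = (p²-1)·Id`. -/
theorem stmt8 [FiniteDimensional ℝ V]
    (ω₁ ω₂ : V ≃ₗ[ℝ] Module.Dual ℝ V)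
    (hω₁ : ∀ x y, ω₁ x y = -ω₁ y x) (hω₂ : ∀ x y, ω₂ x y = -ω₂ y x)
    (B : V →ₗ[ℝ] Module.Dual ℝ V) (hB : ∀ x y, B x y = -B y x) (p : ℝ)
    (hac : blk 0 (-ω₁.symm.toLinearMap) ω₁.toLinearMap 0 *
          blk (ω₂.symm.toLinearMap ∘ₗ B) (-ω₂.symm.toLinearMap)
            (ω₂.toLinearMap + B ∘ₗ ω₂.symm.toLinearMap ∘ₗ B) (-(B ∘ₗ ω₂.symm.toLinearMap)) +
        blk (ω₂.symm.toLinearMap ∘ₗ B) (-ω₂.symm.toLinearMap)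
            (ω₂.toLinearMap + B ∘ₗ ω₂.symm.toLinearMap ∘ₗ B) (-(B ∘ₗ ω₂.symm.toLinearMap)) *
          blk 0 (-ω₁.symm.toLinearMap) ω₁.toLinearMap 0
      = (2 * p) • (1 : Module.End ℝ (V × Module.Dual ℝ V)))
    (A D : Module.End ℝ (Module.Dual ℝ V))
    (hA : A = B ∘ₗ ω₂.symm.toLinearMap)
    (hD : D = ω₁.toLinearMap ∘ₗ ω₂.symm.toLinearMap
      + p • (1 : Module.End ℝ (Module.Dual ℝ V))) :
    A * D = D * A ∧ A * A + D * D = (p ^ 2 - 1) • (1 : Module.End ℝ (Module.Dual ℝ V)) := by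
  -- pointwise form of hac
  have h := fun z : V × Module.Dual ℝ V => LinearMap.congr_fun hac z
  simp only [blk, Module.End.mul_apply, LinearMap.add_apply, LinearMap.prod_apply,
    LinearMap.coe_comp, Function.comp_apply, LinearMap.fst_apply, LinearMap.snd_apply,
    LinearMap.neg_apply, LinearMap.zero_apply, LinearMap.smul_apply, Module.End.one_apply,
    Function.prod, LinearEquiv.coe_coe, Prod.mk_add_mk, Prod.smul_mk] at h
  -- bottom-left block equation
  have key1 : ∀ v : V, ω₁ (ω₂.symm (B v)) = B (ω₂.symm (ω₁ v)) := by
    intro v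
    have := congrArg Prod.snd (h (v, 0))
    simp only [map_zero, add_zero, zero_add, neg_zero, Prod.smul_snd, smul_zero] at this
    -- this : ω₁ (ω₂.symm (B v)) + -(B (ω₂.symm (ω₁ v))) = 0
    linear_combination (norm := module) this
  -- bottom-right block equation
  have key2 : ∀ f : Module.Dual ℝ V,
      -(ω₁ (ω₂.symm f)) + (-(ω₂ (ω₁.symm f)) - B (ω₂.symm (B (ω₁.symm f)))) = (2 * p) • f := by
    intro f
    have := congrArg Prod.snd (h (0, f))
    simp only [map_zero, add_zero, zero_add, map_neg, neg_neg, Prod.smul_snd] at this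
    linear_combination (norm := module) this
  subst hA hD
  constructor
  · apply LinearMap.ext; intro f
    simp only [Module.End.mul_apply, LinearMap.add_apply, LinearMap.coe_comp,
      Function.comp_apply, LinearMap.smul_apply, Module.End.one_apply, LinearEquiv.coe_coe,
      map_add, map_smul]
    rw [key1 (ω₂.symm f)]
  · apply LinearMap.ext; intro f
    simp only [Module.End.mul_apply, LinearMap.add_apply, LinearMap.coe_comp,
      Function.comp_apply, LinearMap.smul_apply, Module.End.one_apply, LinearEquiv.coe_coe,
      map_add, map_smul, LinearMap.sub_apply]
    have h2 := key2 (ω₁ (ω₂.symm f))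
    simp only [LinearEquiv.symm_apply_apply, LinearEquiv.apply_symm_apply] at h2
    ext y
    have h2y := DFunLike.congr_fun h2 y
    simp only [LinearMap.add_apply, LinearMap.sub_apply, LinearMap.neg_apply,
      LinearMap.smul_apply, smul_eq_mul] at h2y ⊢
    linarith
end
end

section
/- Let ω₁, ω₂ be symplectic forms on V, B skew-symmetric, p real, and define A = Bω₂⁻¹, D = ω₁ω₂⁻¹ + p·Id. If AD = DA and A² + D² = (p²-1)·Id, then the structures I₁ = [[0,-ω₁⁻¹],[ω₁,0]] and I₂ = [[ω₂⁻¹B, -ω₂⁻¹],[ω₂ + Bω₂⁻¹B, -Bω₂⁻¹]] satisfy I₁I₂ + I₂I₁ = 2p·Id. -/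
noncomputable section

variable {V : Type*} [AddCommGroup V] [Module ℝ V]

/-- Conversely, if `A = Bω₂⁻¹` and `D = ω₁ω₂⁻¹ + p·Id` satisfy `AD = DA`
and `A² + D² = (p²-1)·Id`, then `I₁ = [[0,-ω₁⁻¹],[ω₁,0]]` and
`I₂ = [[ω₂⁻¹B, -ω₂⁻¹],[ω₂ + Bω₂⁻¹B, -Bω₂⁻¹]]` satisfy `I₁I₂ + I₂I₁ = 2p·Id`. -/
theorem stmt9 [FiniteDimensional ℝ V]
    (ω₁ ω₂ : V ≃ₗ[ℝ] Module.Dual ℝ V)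
    (hω₁ : ∀ x y, ω₁ x y = -ω₁ y x) (hω₂ : ∀ x y, ω₂ x y = -ω₂ y x)
    (B : V →ₗ[ℝ] Module.Dual ℝ V) (hB : ∀ x y, B x y = -B y x) (p : ℝ)
    (A D : Module.End ℝ (Module.Dual ℝ V))
    (hA : A = B ∘ₗ ω₂.symm.toLinearMap)
    (hD : D = ω₁.toLinearMap ∘ₗ ω₂.symm.toLinearMap
      + p • (1 : Module.End ℝ (Module.Dual ℝ V)))
    (hcomm : A * D = D * A)
    (hsq : A * A + D * D = (p ^ 2 - 1) • (1 : Module.End ℝ (Module.Dual ℝ V))) :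
    blk 0 (-ω₁.symm.toLinearMap) ω₁.toLinearMap 0 *
        blk (ω₂.symm.toLinearMap ∘ₗ B) (-ω₂.symm.toLinearMap)
          (ω₂.toLinearMap + B ∘ₗ ω₂.symm.toLinearMap ∘ₗ B) (-(B ∘ₗ ω₂.symm.toLinearMap)) +
      blk (ω₂.symm.toLinearMap ∘ₗ B) (-ω₂.symm.toLinearMap)
          (ω₂.toLinearMap + B ∘ₗ ω₂.symm.toLinearMap ∘ₗ B) (-(B ∘ₗ ω₂.symm.toLinearMap)) *
        blk 0 (-ω₁.symm.toLinearMap) ω₁.toLinearMap 0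
      = (2 * p) • (1 : Module.End ℝ (V × Module.Dual ℝ V)) := by
  subst hA hD
  -- commutation identity, pointwise
  have comm' : ∀ f : Module.Dual ℝ V,
      ω₁ (ω₂.symm (B (ω₂.symm f))) = B (ω₂.symm (ω₁ (ω₂.symm f))) := by
    intro f
    have h := DFunLike.congr_fun hcomm f
    simp only [Module.End.mul_apply, LinearMap.add_apply, LinearMap.smul_apply,
      Module.End.one_apply, LinearMap.coe_comp, Function.comp_apply,
      LinearEquiv.coe_coe, map_add, map_smul] at h
    have := h.symm
    linear_combination (norm := module) this
  -- square identity, pointwise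
  have sq' : ∀ f : Module.Dual ℝ V,
      B (ω₂.symm (B (ω₂.symm f))) + ω₁ (ω₂.symm (ω₁ (ω₂.symm f)))
        + (2 * p) • ω₁ (ω₂.symm f) + f = 0 := by
    intro f
    have h := DFunLike.congr_fun hsq f
    simp only [Module.End.mul_apply, LinearMap.add_apply, LinearMap.smul_apply,
      Module.End.one_apply, LinearMap.coe_comp, Function.comp_apply,
      LinearEquiv.coe_coe, map_add, map_smul] at h
    linear_combination (norm := module) h - (p^2 - 1) • f
  refine LinearMap.ext fun z => ?_
  obtain ⟨x, f⟩ := z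
  simp only [blk, Module.End.mul_apply, LinearMap.add_apply, LinearMap.smul_apply,
    Module.End.one_apply, LinearMap.prod_apply, Function.prod, LinearMap.coe_comp,
    Function.comp_apply, LinearMap.fst_apply, LinearMap.snd_apply,
    LinearMap.neg_apply, LinearMap.zero_apply, LinearEquiv.coe_coe,
    map_add, map_neg, map_smul, map_zero, Prod.smul_mk, Prod.mk_add_mk,
    Prod.fst_add, Prod.snd_add, Prod.mk.injEq]
  refine ⟨?_, ?_⟩
  · -- first component
    apply ω₁.injective
    simp only [map_add, map_neg, map_smul, map_zero, LinearEquiv.apply_symm_apply]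
    have h1 := sq' (ω₂ x)
    rw [LinearEquiv.symm_apply_apply] at h1
    have h2 := comm' (ω₂ (ω₁.symm f))
    rw [LinearEquiv.symm_apply_apply, LinearEquiv.apply_symm_apply] at h2
    linear_combination (norm := module) - h1 - h2
  · -- second component
    have h1 := sq' (ω₂ (ω₁.symm f))
    rw [LinearEquiv.symm_apply_apply, LinearEquiv.apply_symm_apply] at h1
    have h2 := comm' (ω₂ x)
    rw [LinearEquiv.symm_apply_apply] at h2
    linear_combination (norm := module) - h1 + h2

end
end

section
/- In the setting of anti-commuting case p = 0: if ω₁, ω₂ are symplectic forms and B is skew-symmetric with (Bω₂⁻¹)² + (ω₁ω₂⁻¹)² = -Id and Bω₂⁻¹ commutes with ω₁ω₂⁻¹, then the four relations hold: ω₂⁻¹ω₁ + ω₁⁻¹ω₂ + ω₁⁻¹Bω₂⁻¹B = 0, ω₁ω₂⁻¹ + ω₂ω₁⁻¹ + Bω₂⁻¹Bω₁⁻¹ = 0, ω₁⁻¹Bω₂⁻¹ = ω₂⁻¹Bω₁⁻¹, and ω₁ω₂⁻¹B = Bω₂⁻¹ω₁. -/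
/-!
Write `J = ω₁ω₂⁻¹` and `K = Bω₂⁻¹`, endomorphisms of `V*`. The first two relations are
`ω₁⁻¹ (K² + J² + 1) ω₂ = 0` and `(K² + J² + 1) ω₂ω₁⁻¹ = 0`, and the fourth is `JK = KJ` composed
with `ω₂` on the right. Conjugating the fourth relation by `ω₁⁻¹` gives the third.
-/

theorem LinearEquiv.comp_symm_eq_symm_comp_of_comp_eq {R M N : Type*} [Semiring R]
    [AddCommMonoid M] [AddCommMonoid N] [Module R M] [Module R N]
    (e : M ≃ₗ[R] N) {f : M →ₗ[R] M} {g : N →ₗ[R] N}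
    (h : e.toLinearMap ∘ₗ f = g ∘ₗ e.toLinearMap) :
    f ∘ₗ e.symm.toLinearMap = e.symm.toLinearMap ∘ₗ g := by
  ext y
  simpa using congrArg e.symm (LinearMap.congr_fun h (e.symm y))

section
variable {R M N : Type*} [Semiring R] [AddCommMonoid M] [AddCommMonoid N] [Module R M] [Module R N]
  (ω₁ ω₂ : M ≃ₗ[R] N) (B : M →ₗ[R] N)

theorem symm_comp_add_symm_comp_add_symm_comp_comp_eq :
    ω₂.symm.toLinearMap ∘ₗ ω₁.toLinearMap + ω₁.symm.toLinearMap ∘ₗ ω₂.toLinearMap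
        + ω₁.symm.toLinearMap ∘ₗ B ∘ₗ ω₂.symm.toLinearMap ∘ₗ B
      = ω₁.symm.toLinearMap ∘ₗ
          ((B ∘ₗ ω₂.symm.toLinearMap) ∘ₗ (B ∘ₗ ω₂.symm.toLinearMap)
            + (ω₁.toLinearMap ∘ₗ ω₂.symm.toLinearMap) ∘ₗ (ω₁.toLinearMap ∘ₗ ω₂.symm.toLinearMap)
            + LinearMap.id) ∘ₗ ω₂.toLinearMap := by
  ext x
  simp only [LinearMap.add_apply, LinearMap.coe_comp, Function.comp_apply, LinearEquiv.coe_coe,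
    LinearMap.id_apply, LinearEquiv.symm_apply_apply, map_add]
  abel

theorem comp_symm_add_comp_symm_add_comp_symm_comp_eq :
    ω₁.toLinearMap ∘ₗ ω₂.symm.toLinearMap + ω₂.toLinearMap ∘ₗ ω₁.symm.toLinearMap
        + B ∘ₗ ω₂.symm.toLinearMap ∘ₗ B ∘ₗ ω₁.symm.toLinearMap
      = ((B ∘ₗ ω₂.symm.toLinearMap) ∘ₗ (B ∘ₗ ω₂.symm.toLinearMap)
            + (ω₁.toLinearMap ∘ₗ ω₂.symm.toLinearMap) ∘ₗ (ω₁.toLinearMap ∘ₗ ω₂.symm.toLinearMap)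
            + LinearMap.id) ∘ₗ ω₂.toLinearMap ∘ₗ ω₁.symm.toLinearMap := by
  ext x
  simp only [LinearMap.add_apply, LinearMap.coe_comp, Function.comp_apply, LinearEquiv.coe_coe,
    LinearMap.id_apply, LinearEquiv.symm_apply_apply, LinearEquiv.apply_symm_apply]
  abel

theorem comp_symm_comp_eq_of_commute
    (h : (B ∘ₗ ω₂.symm.toLinearMap) ∘ₗ (ω₁.toLinearMap ∘ₗ ω₂.symm.toLinearMap)
      = (ω₁.toLinearMap ∘ₗ ω₂.symm.toLinearMap) ∘ₗ (B ∘ₗ ω₂.symm.toLinearMap)) :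
    ω₁.toLinearMap ∘ₗ ω₂.symm.toLinearMap ∘ₗ B = B ∘ₗ ω₂.symm.toLinearMap ∘ₗ ω₁.toLinearMap := by
  ext x
  simpa using (LinearMap.congr_fun h (ω₂ x)).symm

end

theorem stmt10_general {V : Type*} [AddCommGroup V] [Module ℝ V]
    (ω₁ ω₂ : V ≃ₗ[ℝ] Module.Dual ℝ V)
    (B : V →ₗ[ℝ] Module.Dual ℝ V)
    (hsq : (B ∘ₗ ω₂.symm.toLinearMap) ∘ₗ (B ∘ₗ ω₂.symm.toLinearMap)
        + (ω₁.toLinearMap ∘ₗ ω₂.symm.toLinearMap) ∘ₗ (ω₁.toLinearMap ∘ₗ ω₂.symm.toLinearMap)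
      = -LinearMap.id)
    (hcomm : (B ∘ₗ ω₂.symm.toLinearMap) ∘ₗ (ω₁.toLinearMap ∘ₗ ω₂.symm.toLinearMap)
      = (ω₁.toLinearMap ∘ₗ ω₂.symm.toLinearMap) ∘ₗ (B ∘ₗ ω₂.symm.toLinearMap)) :
    ω₂.symm.toLinearMap ∘ₗ ω₁.toLinearMap + ω₁.symm.toLinearMap ∘ₗ ω₂.toLinearMap
        + ω₁.symm.toLinearMap ∘ₗ B ∘ₗ ω₂.symm.toLinearMap ∘ₗ B = 0 ∧
    ω₁.toLinearMap ∘ₗ ω₂.symm.toLinearMap + ω₂.toLinearMap ∘ₗ ω₁.symm.toLinearMap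
        + B ∘ₗ ω₂.symm.toLinearMap ∘ₗ B ∘ₗ ω₁.symm.toLinearMap = 0 ∧
    ω₁.symm.toLinearMap ∘ₗ B ∘ₗ ω₂.symm.toLinearMap
      = ω₂.symm.toLinearMap ∘ₗ B ∘ₗ ω₁.symm.toLinearMap ∧
    ω₁.toLinearMap ∘ₗ ω₂.symm.toLinearMap ∘ₗ B = B ∘ₗ ω₂.symm.toLinearMap ∘ₗ ω₁.toLinearMap := by
  have hsq_add_one : (B ∘ₗ ω₂.symm.toLinearMap) ∘ₗ (B ∘ₗ ω₂.symm.toLinearMap)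
      + (ω₁.toLinearMap ∘ₗ ω₂.symm.toLinearMap) ∘ₗ (ω₁.toLinearMap ∘ₗ ω₂.symm.toLinearMap)
      + LinearMap.id = 0 := by
    rw [hsq]
    abel
  have hJK := comp_symm_comp_eq_of_commute ω₁ ω₂ B hcomm
  refine ⟨?_, ?_, ?_, hJK⟩
  · rw [symm_comp_add_symm_comp_add_symm_comp_comp_eq, hsq_add_one, LinearMap.zero_comp,
      LinearMap.comp_zero]
  · rw [comp_symm_add_comp_symm_add_comp_symm_comp_eq, hsq_add_one, LinearMap.zero_comp]
  · exact (ω₁.comp_symm_eq_symm_comp_of_comp_eq (g := B ∘ₗ ω₂.symm.toLinearMap) hJK).symm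

/-- Anti-commuting case `p = 0`: if `(Bω₂⁻¹)² + (ω₁ω₂⁻¹)² = -Id` and
`Bω₂⁻¹` commutes with `ω₁ω₂⁻¹`, then the four relations hold:
`ω₂⁻¹ω₁ + ω₁⁻¹ω₂ + ω₁⁻¹Bω₂⁻¹B = 0`, `ω₁ω₂⁻¹ + ω₂ω₁⁻¹ + Bω₂⁻¹Bω₁⁻¹ = 0`,
`ω₁⁻¹Bω₂⁻¹ = ω₂⁻¹Bω₁⁻¹`, `ω₁ω₂⁻¹B = Bω₂⁻¹ω₁`. -/
theorem stmt10 {V : Type*} [AddCommGroup V] [Module ℝ V] [FiniteDimensional ℝ V]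
    (ω₁ ω₂ : V ≃ₗ[ℝ] Module.Dual ℝ V)
    (hω₁ : ∀ x y, ω₁ x y = -ω₁ y x) (hω₂ : ∀ x y, ω₂ x y = -ω₂ y x)
    (B : V →ₗ[ℝ] Module.Dual ℝ V) (hB : ∀ x y, B x y = -B y x)
    (hsq : (B ∘ₗ ω₂.symm.toLinearMap) ∘ₗ (B ∘ₗ ω₂.symm.toLinearMap)
        + (ω₁.toLinearMap ∘ₗ ω₂.symm.toLinearMap) ∘ₗ (ω₁.toLinearMap ∘ₗ ω₂.symm.toLinearMap)
      = -LinearMap.id)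
    (hcomm : (B ∘ₗ ω₂.symm.toLinearMap) ∘ₗ (ω₁.toLinearMap ∘ₗ ω₂.symm.toLinearMap)
      = (ω₁.toLinearMap ∘ₗ ω₂.symm.toLinearMap) ∘ₗ (B ∘ₗ ω₂.symm.toLinearMap)) :
    ω₂.symm.toLinearMap ∘ₗ ω₁.toLinearMap + ω₁.symm.toLinearMap ∘ₗ ω₂.toLinearMap
        + ω₁.symm.toLinearMap ∘ₗ B ∘ₗ ω₂.symm.toLinearMap ∘ₗ B = 0 ∧
    ω₁.toLinearMap ∘ₗ ω₂.symm.toLinearMap + ω₂.toLinearMap ∘ₗ ω₁.symm.toLinearMap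
        + B ∘ₗ ω₂.symm.toLinearMap ∘ₗ B ∘ₗ ω₁.symm.toLinearMap = 0 ∧
    ω₁.symm.toLinearMap ∘ₗ B ∘ₗ ω₂.symm.toLinearMap
      = ω₂.symm.toLinearMap ∘ₗ B ∘ₗ ω₁.symm.toLinearMap ∧
    ω₁.toLinearMap ∘ₗ ω₂.symm.toLinearMap ∘ₗ B = B ∘ₗ ω₂.symm.toLinearMap ∘ₗ ω₁.toLinearMap :=
  stmt10_general ω₁ ω₂ B hsq hcomm
end

section
/- Suppose ω₁, ω₂ are symplectic forms on V, B = αω₁ + βω₂ for reals α, β, and I₁, I₂ (as in the B-transformed hypersymplectic setup) satisfy I₁I₂ + I₂I₁ = 2p·Id with |p| < 1. Then the endomorphism ω₂⁻¹ω₁ of V satisfies ((ω₂⁻¹ω₁) + γ·Id)² = θ·Id where γ = (αβ+p)/(α²+1) and θ = γ² − (1+β²)/(1+α²), and θ < 0. -/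
noncomputable section

variable {V : Type*} [AddCommGroup V] [Module ℝ V]

/-- In the `B`-transformed hypersymplectic setup, if `B = αω₁ + βω₂` and
`I₁I₂ + I₂I₁ = 2p·Id` with `|p| < 1`, then `(ω₂⁻¹ω₁ + γ·Id)² = θ·Id` where
`γ = (αβ+p)/(α²+1)`, `θ = γ² - (1+β²)/(1+α²)`, and `θ < 0`. -/
theorem stmt12 [FiniteDimensional ℝ V]
    (ω₁ ω₂ : V ≃ₗ[ℝ] Module.Dual ℝ V)
    (hω₁ : ∀ x y, ω₁ x y = -ω₁ y x) (hω₂ : ∀ x y, ω₂ x y = -ω₂ y x)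
    (α β : ℝ) (B : V →ₗ[ℝ] Module.Dual ℝ V)
    (hBdef : B = α • ω₁.toLinearMap + β • ω₂.toLinearMap)
    (p : ℝ) (hp : |p| < 1)
    (hac : blk 0 (-ω₁.symm.toLinearMap) ω₁.toLinearMap 0 *
          blk (ω₂.symm.toLinearMap ∘ₗ B) (-ω₂.symm.toLinearMap)
            (ω₂.toLinearMap + B ∘ₗ ω₂.symm.toLinearMap ∘ₗ B) (-(B ∘ₗ ω₂.symm.toLinearMap)) +
        blk (ω₂.symm.toLinearMap ∘ₗ B) (-ω₂.symm.toLinearMap)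
            (ω₂.toLinearMap + B ∘ₗ ω₂.symm.toLinearMap ∘ₗ B) (-(B ∘ₗ ω₂.symm.toLinearMap)) *
          blk 0 (-ω₁.symm.toLinearMap) ω₁.toLinearMap 0
      = (2 * p) • (1 : Module.End ℝ (V × Module.Dual ℝ V)))
    (γ θ : ℝ) (hγ : γ = (α * β + p) / (α ^ 2 + 1))
    (hθ : θ = γ ^ 2 - (1 + β ^ 2) / (1 + α ^ 2)) :
    ((ω₂.symm.toLinearMap ∘ₗ ω₁.toLinearMap : Module.End ℝ V) + γ • 1) *
        ((ω₂.symm.toLinearMap ∘ₗ ω₁.toLinearMap : Module.End ℝ V) + γ • 1)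
      = θ • (1 : Module.End ℝ V) ∧ θ < 0 := by
  subst hBdef
  have ha : (0:ℝ) < 1 + α ^ 2 := by positivity
  obtain ⟨hp1, hp2⟩ := abs_lt.mp hp
  constructor
  · ext x
    have h1 := LinearMap.congr_fun hac (x, 0)
    have h2 := congrArg Prod.fst h1
    simp only [blk, Module.End.mul_apply, LinearMap.add_apply, LinearMap.prod_apply, Function.prod,
      LinearMap.coe_comp, Function.comp_apply, LinearMap.fst_apply, LinearMap.snd_apply,
      LinearMap.zero_apply, LinearMap.neg_apply, map_zero, zero_add, add_zero, map_neg, map_add,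
      map_smul, LinearMap.smul_apply, Module.End.one_apply, LinearEquiv.coe_coe, Prod.smul_mk,
      Prod.fst_add, Prod.smul_fst, smul_zero, neg_zero, LinearEquiv.symm_apply_apply,
      LinearEquiv.apply_symm_apply, neg_neg, smul_neg] at h2
    have h3 := congrArg (fun v => ω₂.symm (ω₁ v)) h2
    simp only [map_add, map_smul, map_neg, LinearEquiv.symm_apply_apply,
      LinearEquiv.apply_symm_apply, smul_neg, neg_neg] at h3
    set u := ω₂.symm (ω₁ x) with hu
    set w := ω₂.symm (ω₁ u) with hw
    have h4 : w = ((-(2 * (α * β + p))) / (1 + α ^ 2)) • u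
        + ((-(1 + β ^ 2)) / (1 + α ^ 2)) • x := by
      have h5 : (1 + α ^ 2) • w = (-(2 * (α * β + p))) • u + (-(1 + β ^ 2)) • x := by
        linear_combination (norm := module) -h3
      have h6 := congrArg (fun v => (1 + α ^ 2)⁻¹ • v) h5
      simp only [smul_smul, inv_mul_cancel₀ ha.ne', one_smul, smul_add] at h6
      rw [h6, div_eq_inv_mul, div_eq_inv_mul, mul_smul, mul_smul]
    simp only [Module.End.mul_apply, LinearMap.add_apply, LinearMap.smul_apply,
      Module.End.one_apply, LinearMap.coe_comp, Function.comp_apply, LinearEquiv.coe_coe,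
      map_add, map_smul, ← hu, ← hw]
    rw [h4]
    match_scalars
    · subst hγ
      field_simp
      ring
    · subst hθ hγ
      field_simp
      ring
  · have hθ' : θ = ((α * β + p) ^ 2 - (1 + β ^ 2) * (1 + α ^ 2)) / (1 + α ^ 2) ^ 2 := by
      rw [hθ, hγ]
      field_simp
      ring
    rw [hθ']
    apply div_neg_of_neg_of_pos _ (by positivity)
    nlinarith [mul_nonneg (by linarith : (0:ℝ) ≤ 1 - p) (sq_nonneg (α + β)),
      mul_nonneg (by linarith : (0:ℝ) ≤ 1 + p) (sq_nonneg (α - β)), sq_nonneg p]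

end
end

section
/- Let J be a complex structure on V, ω a symplectic form, B skew-symmetric, I₁ = diag(J, -J*), and I₂ = [[ω⁻¹B, -ω⁻¹],[ω + Bω⁻¹B, -Bω⁻¹]]. Then I₁I₂ + I₂I₁ = 2p·Id holds if and only if the following system holds: ωJ = J*ω, ωJ − J*ω + Bω⁻¹BJ − J*Bω⁻¹B = 0, Jω⁻¹B + ω⁻¹BJ = 2p·Id, J*Bω⁻¹ + Bω⁻¹J* = 2p·Id. -/
noncomputable section

variable {V : Type*} [AddCommGroup V] [Module ℝ V]

lemma blk_apply' (a : V →ₗ[ℝ] V) (b : Module.Dual ℝ V →ₗ[ℝ] V)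
    (c : V →ₗ[ℝ] Module.Dual ℝ V)
    (d : Module.Dual ℝ V →ₗ[ℝ] Module.Dual ℝ V) (x : V) (f : Module.Dual ℝ V) :
    blk a b c d (x, f) = (a x + b f, c x + d f) := by
  simp [blk]

lemma blk_inj' {a a' : V →ₗ[ℝ] V} {b b' : Module.Dual ℝ V →ₗ[ℝ] V}
    {c c' : V →ₗ[ℝ] Module.Dual ℝ V}
    {d d' : Module.Dual ℝ V →ₗ[ℝ] Module.Dual ℝ V} :
    blk a b c d = blk a' b' c' d' ↔ (a = a' ∧ b = b' ∧ c = c' ∧ d = d') := by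
  constructor
  · intro h
    have h1 : ∀ x : V, (a x, c x) = (a' x, c' x) := by
      intro x
      have := DFunLike.congr_fun h (x, 0)
      simpa [blk_apply'] using this
    have h2 : ∀ f : Module.Dual ℝ V, (b f, d f) = (b' f, d' f) := by
      intro f
      have := DFunLike.congr_fun h ((0 : V), f)
      simpa [blk_apply'] using this
    refine ⟨LinearMap.ext fun x => ?_, LinearMap.ext fun f => ?_,
      LinearMap.ext fun x => ?_, LinearMap.ext fun f => ?_⟩
    · exact congrArg Prod.fst (h1 x)
    · exact congrArg Prod.fst (h2 f)
    · exact congrArg Prod.snd (h1 x)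
    · exact congrArg Prod.snd (h2 f)
  · rintro ⟨rfl, rfl, rfl, rfl⟩; rfl

/-- For `I₁ = diag(J, -J*)` and
`I₂ = [[ω⁻¹B, -ω⁻¹],[ω + Bω⁻¹B, -Bω⁻¹]]`, the relation `I₁I₂ + I₂I₁ = 2p·Id` holds if
and only if the system `ωJ = J*ω`, `ωJ - J*ω + Bω⁻¹BJ - J*Bω⁻¹B = 0`,
`Jω⁻¹B + ω⁻¹BJ = 2p·Id`, `J*Bω⁻¹ + Bω⁻¹J* = 2p·Id` holds. -/
theorem stmt13 [FiniteDimensional ℝ V]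
    (J : V →ₗ[ℝ] V) (hJ : J ∘ₗ J = -LinearMap.id)
    (ω : V ≃ₗ[ℝ] Module.Dual ℝ V) (hω : ∀ x y, ω x y = -ω y x)
    (B : V →ₗ[ℝ] Module.Dual ℝ V) (hB : ∀ x y, B x y = -B y x) (p : ℝ) :
    (blk J 0 0 (-J.dualMap) *
          blk (ω.symm.toLinearMap ∘ₗ B) (-ω.symm.toLinearMap)
            (ω.toLinearMap + B ∘ₗ ω.symm.toLinearMap ∘ₗ B) (-(B ∘ₗ ω.symm.toLinearMap)) +
        blk (ω.symm.toLinearMap ∘ₗ B) (-ω.symm.toLinearMap)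
            (ω.toLinearMap + B ∘ₗ ω.symm.toLinearMap ∘ₗ B) (-(B ∘ₗ ω.symm.toLinearMap)) *
          blk J 0 0 (-J.dualMap)
      = (2 * p) • (1 : Module.End ℝ (V × Module.Dual ℝ V)))
    ↔ (ω.toLinearMap ∘ₗ J = J.dualMap ∘ₗ ω.toLinearMap ∧
       ω.toLinearMap ∘ₗ J - J.dualMap ∘ₗ ω.toLinearMap
           + (B ∘ₗ ω.symm.toLinearMap ∘ₗ B) ∘ₗ J
           - J.dualMap ∘ₗ (B ∘ₗ ω.symm.toLinearMap ∘ₗ B) = 0 ∧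
       J ∘ₗ ω.symm.toLinearMap ∘ₗ B + (ω.symm.toLinearMap ∘ₗ B) ∘ₗ J
         = (2 * p) • (LinearMap.id : V →ₗ[ℝ] V) ∧
       J.dualMap ∘ₗ B ∘ₗ ω.symm.toLinearMap + (B ∘ₗ ω.symm.toLinearMap) ∘ₗ J.dualMap
         = (2 * p) • (LinearMap.id : Module.Dual ℝ V →ₗ[ℝ] Module.Dual ℝ V)) := by
  have hL : (blk J 0 0 (-J.dualMap) *
          blk (ω.symm.toLinearMap ∘ₗ B) (-ω.symm.toLinearMap)
            (ω.toLinearMap + B ∘ₗ ω.symm.toLinearMap ∘ₗ B) (-(B ∘ₗ ω.symm.toLinearMap)) +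
        blk (ω.symm.toLinearMap ∘ₗ B) (-ω.symm.toLinearMap)
            (ω.toLinearMap + B ∘ₗ ω.symm.toLinearMap ∘ₗ B) (-(B ∘ₗ ω.symm.toLinearMap)) *
          blk J 0 0 (-J.dualMap))
      = blk (J ∘ₗ ω.symm.toLinearMap ∘ₗ B + (ω.symm.toLinearMap ∘ₗ B) ∘ₗ J)
          (ω.symm.toLinearMap ∘ₗ J.dualMap - J ∘ₗ ω.symm.toLinearMap)
          (ω.toLinearMap ∘ₗ J - J.dualMap ∘ₗ ω.toLinearMap
             + (B ∘ₗ ω.symm.toLinearMap ∘ₗ B) ∘ₗ J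
             - J.dualMap ∘ₗ (B ∘ₗ ω.symm.toLinearMap ∘ₗ B))
          (J.dualMap ∘ₗ B ∘ₗ ω.symm.toLinearMap + (B ∘ₗ ω.symm.toLinearMap) ∘ₗ J.dualMap) := by
    apply LinearMap.ext
    rintro ⟨x, f⟩
    simp only [LinearMap.add_apply, Module.End.mul_apply, blk_apply', LinearMap.comp_apply,
      LinearMap.neg_apply, LinearMap.sub_apply, LinearMap.zero_apply, map_add, map_neg,
      map_zero, Prod.mk_add_mk, Prod.mk.injEq]
    constructor <;> abel
  have hR : (2 * p) • (1 : Module.End ℝ (V × Module.Dual ℝ V))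
      = blk ((2 * p) • (LinearMap.id : V →ₗ[ℝ] V)) 0 0
          ((2 * p) • (LinearMap.id : Module.Dual ℝ V →ₗ[ℝ] Module.Dual ℝ V)) := by
    apply LinearMap.ext
    rintro ⟨x, f⟩
    simp [blk_apply', Prod.smul_mk]
  have h12 : (ω.symm.toLinearMap ∘ₗ J.dualMap - J ∘ₗ ω.symm.toLinearMap = 0)
      ↔ (ω.toLinearMap ∘ₗ J = J.dualMap ∘ₗ ω.toLinearMap) := by
    constructor
    · intro h
      have h' : ω.symm.toLinearMap ∘ₗ J.dualMap = J ∘ₗ ω.symm.toLinearMap := by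
        rwa [sub_eq_zero] at h
      apply LinearMap.ext
      intro x
      have hx := DFunLike.congr_fun h' (ω x)
      simp only [LinearMap.comp_apply, LinearEquiv.coe_coe, LinearEquiv.symm_apply_apply] at hx ⊢
      rw [← hx, LinearEquiv.apply_symm_apply]
    · intro h
      rw [sub_eq_zero]
      apply LinearMap.ext
      intro f
      have hx := DFunLike.congr_fun h (ω.symm f)
      simp only [LinearMap.comp_apply, LinearEquiv.coe_coe, LinearEquiv.apply_symm_apply]
        at hx ⊢
      rw [← hx, LinearEquiv.symm_apply_apply]
  rw [hL, hR, blk_inj']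
  constructor
  · rintro ⟨e11, e12, e21, e22⟩
    exact ⟨h12.mp e12, e21, e11, e22⟩
  · rintro ⟨c1, c2, c3, c4⟩
    exact ⟨c3, h12.mpr c1, c2, c4⟩

end
end

section
/- Let e¹,f¹,...,e^{2n},f^{2n} be the standard dual basis of ℝ^{4n}, ω₂ = Σᵢ (e^{2i-1}∧f^{2i-1} − e^{2i}∧f^{2i}), ω₁ = Σᵢ λᵢ(e^{2i-1}∧f^{2i} + e^{2i}∧f^{2i-1}), B = Σᵢ μᵢ(e^{2i-1}∧f^{2i} + e^{2i}∧f^{2i-1}) with λᵢ² + μᵢ² = 1 for each i. Then A = Bω₂⁻¹ and D = ω₁ω₂⁻¹ satisfy AD = DA and A² + D² = −Id. -/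
/-!
All three forms are block diagonal with one `4 × 4` block per index `i`, and the blocks of `ω₁`
and `B` are `λᵢ J` and `μᵢ J` for the same `J` (`crossBlock`). The block `W` of `ω₂`
(`omega2Block`) satisfies `W² = -1`, so `ω₂⁻¹ = -ω₂`, and `Q := J (-W)` (`complexBlock`) again
satisfies `Q² = -1`. Hence, blockwise, `A = μᵢ Q` and `D = λᵢ Q`: they commute, and
`A² + D² = (λᵢ² + μᵢ²) Q² = -1`.
-/

open Matrix

/-- The matrix of `ω₂ = Σᵢ (e^{2i-1}∧f^{2i-1} − e^{2i}∧f^{2i})` on `ℝ^{4n}`, in the basis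
`e_{2i-1}, f_{2i-1}, e_{2i}, f_{2i}` (the `i`-th `4`-dimensional block). -/
noncomputable def omega2Mat (n : ℕ) : Matrix (Fin 4 × Fin n) (Fin 4 × Fin n) ℝ :=
  blockDiagonal fun _ : Fin n =>
    !![0, 1, 0, 0; -1, 0, 0, 0; 0, 0, 0, -1; 0, 0, 1, 0]

/-- The matrix of `ω₁ = Σᵢ λᵢ(e^{2i-1}∧f^{2i} + e^{2i}∧f^{2i-1})`. -/
noncomputable def omega1Mat (n : ℕ) (lam : Fin n → ℝ) :
    Matrix (Fin 4 × Fin n) (Fin 4 × Fin n) ℝ :=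
  blockDiagonal fun i : Fin n =>
    lam i • !![0, 0, 0, 1; 0, 0, -1, 0; 0, 1, 0, 0; -1, 0, 0, 0]

/-- The matrix of `B = Σᵢ μᵢ(e^{2i-1}∧f^{2i} + e^{2i}∧f^{2i-1})`. -/
noncomputable def BMat (n : ℕ) (mu : Fin n → ℝ) :
    Matrix (Fin 4 × Fin n) (Fin 4 × Fin n) ℝ :=
  blockDiagonal fun i : Fin n =>
    mu i • !![0, 0, 0, 1; 0, 0, -1, 0; 0, 1, 0, 0; -1, 0, 0, 0]

namespace Matrix

variable {m o R : Type*} [Fintype m] [DecidableEq m] [CommRing R]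

theorem inv_eq_neg_of_mul_self_eq_neg_one {M : Matrix m m R} (hM : M * M = -1) : M⁻¹ = -M :=
  inv_eq_right_inv (by rw [mul_neg, hM, neg_neg])

variable [Fintype o] [DecidableEq o]

theorem blockDiagonal_smul_mul_blockDiagonal_smul (a b : o → R) (Q : Matrix m m R) :
    blockDiagonal (fun i => a i • Q) * blockDiagonal (fun i => b i • Q) =
      blockDiagonal fun i => (a i * b i) • (Q * Q) := by
  rw [← blockDiagonal_mul]
  simp only [smul_mul_smul_comm]

theorem commute_blockDiagonal_smul (a b : o → R) (Q : Matrix m m R) :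
    Commute (blockDiagonal fun i => a i • Q) (blockDiagonal fun i => b i • Q) := by
  unfold Commute SemiconjBy
  simp only [blockDiagonal_smul_mul_blockDiagonal_smul, mul_comm]

theorem blockDiagonal_smul_mul_self_add_mul_self {Q : Matrix m m R} (hQ : Q * Q = -1)
    {a b : o → R} (hab : ∀ i, a i ^ 2 + b i ^ 2 = 1) :
    blockDiagonal (fun i => a i • Q) * blockDiagonal (fun i => a i • Q) +
      blockDiagonal (fun i => b i • Q) * blockDiagonal (fun i => b i • Q) = -1 := by
  have hblock : ∀ i, (a i * a i) • (Q * Q) + (b i * b i) • (Q * Q) = -1 := fun i => by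
    rw [← add_smul, hQ, smul_neg, smul_one_eq_diagonal, ← pow_two, ← pow_two, hab i,
      diagonal_one]
  simp only [blockDiagonal_smul_mul_blockDiagonal_smul, ← blockDiagonal_add, Pi.add_def, hblock]
  rw [← blockDiagonal_one, ← blockDiagonal_neg]
  rfl

end Matrix

noncomputable def omega2Block : Matrix (Fin 4) (Fin 4) ℝ :=
  !![0, 1, 0, 0; -1, 0, 0, 0; 0, 0, 0, -1; 0, 0, 1, 0]

noncomputable def crossBlock : Matrix (Fin 4) (Fin 4) ℝ :=
  !![0, 0, 0, 1; 0, 0, -1, 0; 0, 1, 0, 0; -1, 0, 0, 0]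

noncomputable def complexBlock : Matrix (Fin 4) (Fin 4) ℝ :=
  !![0, 0, -1, 0; 0, 0, 0, -1; 1, 0, 0, 0; 0, 1, 0, 0]

theorem omega2Block_mul_self : omega2Block * omega2Block = -1 := by
  ext i j
  fin_cases i <;> fin_cases j <;>
    simp [omega2Block, mul_apply, Fin.sum_univ_four, one_apply]

theorem crossBlock_mul_neg_omega2Block : crossBlock * -omega2Block = complexBlock := by
  ext i j
  fin_cases i <;> fin_cases j <;>
    simp [crossBlock, omega2Block, complexBlock, mul_apply, Fin.sum_univ_four]

theorem complexBlock_mul_self : complexBlock * complexBlock = -1 := by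
  ext i j
  fin_cases i <;> fin_cases j <;>
    simp [complexBlock, mul_apply, Fin.sum_univ_four, one_apply]

theorem omega2Mat_mul_self (n : ℕ) : omega2Mat n * omega2Mat n = -1 := by
  change blockDiagonal (fun _ => omega2Block) * blockDiagonal (fun _ => omega2Block) = _
  rw [← blockDiagonal_mul, omega2Block_mul_self, ← blockDiagonal_one, ← blockDiagonal_neg]
  rfl

theorem omega2Mat_inv (n : ℕ) :
    (omega2Mat n)⁻¹ = blockDiagonal fun _ : Fin n => -omega2Block := by
  rw [inv_eq_neg_of_mul_self_eq_neg_one (omega2Mat_mul_self n), omega2Mat, ← blockDiagonal_neg]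
  rfl

/-- Both `omega1Mat n c` and `BMat n c` unfold to `blockDiagonal fun i => c i • crossBlock`. -/
theorem blockDiagonal_smul_crossBlock_mul_omega2Mat_inv (n : ℕ) (c : Fin n → ℝ) :
    blockDiagonal (fun i => c i • crossBlock) * (omega2Mat n)⁻¹ =
      blockDiagonal fun i => c i • complexBlock := by
  rw [omega2Mat_inv, ← blockDiagonal_mul]
  simp only [smul_mul_assoc, crossBlock_mul_neg_omega2Block]

/-- With `λᵢ² + μᵢ² = 1`, the maps `A = Bω₂⁻¹` and `D = ω₁ω₂⁻¹`
satisfy `AD = DA` and `A² + D² = -Id`. -/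
theorem stmt15 (n : ℕ) (lam mu : Fin n → ℝ)
    (h : ∀ i, lam i ^ 2 + mu i ^ 2 = 1)
    (A D : Matrix (Fin 4 × Fin n) (Fin 4 × Fin n) ℝ)
    (hA : A = BMat n mu * (omega2Mat n)⁻¹)
    (hD : D = omega1Mat n lam * (omega2Mat n)⁻¹) :
    A * D = D * A ∧ A * A + D * D = -1 := by
  rw [hA, hD, BMat, omega1Mat]
  simp only [← crossBlock.eq_def, blockDiagonal_smul_crossBlock_mul_omega2Mat_inv]
  exact ⟨commute_blockDiagonal_smul mu lam complexBlock,
    blockDiagonal_smul_mul_self_add_mul_self complexBlock_mul_self fun i => by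
      rw [add_comm, h i]⟩
end

section
/- Let V be a real vector space of dimension 2n, let ω be a real 2-form on V, and let σ denote the Chevalley anti-automorphism (reversal of the order of wedge factors) of Λ•V* ⊗ ℂ. Then the top-degree component of σ(e^{iω}) ∧ e^{-iω} equals (−2i)^n ω^n / n! up to sign, and it is nonzero if and only if ω^n ≠ 0. -/
open ExteriorAlgebra

lemma rev2 {W : Type*} [AddCommGroup W] [Module ℂ W] {ω : ExteriorAlgebra ℂ W}
    (hω : ω ∈ ⋀[ℂ]^2 W) :
    CliffordAlgebra.reverse (Q := (0 : QuadraticForm ℂ W)) ω = -ω := by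
  have h2 : ω ∈ LinearMap.range (ι ℂ : W →ₗ[ℂ] _) * LinearMap.range (ι ℂ : W →ₗ[ℂ] _) := by
    rw [← pow_two]; exact hω
  refine Submodule.mul_induction_on h2 ?_ ?_
  · rintro _ ⟨a, rfl⟩ _ ⟨b, rfl⟩
    rw [CliffordAlgebra.reverse.map_mul, CliffordAlgebra.reverse_ι, CliffordAlgebra.reverse_ι]
    have h := CliffordAlgebra.ι_mul_ι_add_swap (Q := (0 : QuadraticForm ℂ W)) a b
    simp only [QuadraticMap.polar, QuadraticMap.zero_apply, sub_zero, sub_self, map_zero] at h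
    rw [add_comm] at h
    exact eq_neg_of_add_eq_zero_left h
  · intro x y hx hy
    rw [map_add, hx, hy, neg_add]

lemma bot_of_big {W : Type*} [AddCommGroup W] [Module ℂ W] [FiniteDimensional ℂ W]
    {k : ℕ} (hk : Module.finrank ℂ W < k) : (⋀[ℂ]^k W : Submodule ℂ _) = ⊥ := by
  rw [← ιMulti_span_fixedDegree, Submodule.span_eq_bot]
  rintro x ⟨v, rfl⟩
  refine AlternatingMap.map_linearDependent _ _ (fun h => ?_)
  have := h.fintype_card_le_finrank
  simp only [Fintype.card_fin] at this
  omega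

lemma revpow {W : Type*} [AddCommGroup W] [Module ℂ W] {ω : ExteriorAlgebra ℂ W}
    (hω : ω ∈ ⋀[ℂ]^2 W) (k : ℕ) :
    CliffordAlgebra.reverse (Q := (0 : QuadraticForm ℂ W)) (ω ^ k)
      = ((-1 : ℂ) ^ k) • ω ^ k := by
  induction k with
  | zero => simp [CliffordAlgebra.reverse.map_one]
  | succ k ih =>
    rw [pow_succ, CliffordAlgebra.reverse.map_mul, ih, rev2 hω, mul_smul_comm,
      neg_mul, smul_neg, ← pow_succ', ← pow_succ]
    rw [pow_succ (-1 : ℂ) k, mul_comm ((-1:ℂ)^k), mul_smul, neg_one_smul]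


/-- symplectic special case of the Chevalley pairing computation:
for a complexified `2n`-dimensional space `W` and a `2`-form `ω`, the top-degree
(`2n`) component of `σ(e^{iω}) ∧ e^{-iω}` (where `σ` is the reversal anti-automorphism
and `e^{±iω} = Σ_{k≤n} (±i)^k ω^k / k!`) is `(−2i)^n ω^n / n!` up to sign; in
particular it is nonzero iff `ω^n ≠ 0`. -/
theorem stmt18 (n : ℕ) {W : Type*} [AddCommGroup W] [Module ℂ W]
    [FiniteDimensional ℂ W] (hdim : Module.finrank ℂ W = 2 * n)
    (ω : ExteriorAlgebra ℂ W) (hω : ω ∈ ⋀[ℂ]^2 W)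
    (top : ExteriorAlgebra ℂ W)
    (htop : top = GradedRing.proj (fun i : ℕ => ⋀[ℂ]^i W) (2 * n)
      (CliffordAlgebra.reverse (Q := (0 : QuadraticForm ℂ W))
          (∑ k ∈ Finset.range (n + 1), ((Complex.I ^ k / k.factorial : ℂ)) • ω ^ k) *
        ∑ k ∈ Finset.range (n + 1), (((-Complex.I) ^ k / k.factorial : ℂ)) • ω ^ k)) :
    (top = (((-2 * Complex.I) ^ n / n.factorial : ℂ)) • ω ^ n ∨
      top = -((((-2 * Complex.I) ^ n / n.factorial : ℂ)) • ω ^ n)) ∧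
    (top ≠ 0 ↔ ω ^ n ≠ 0) := by
  set c : ℕ → ℂ := fun k => (-Complex.I) ^ k / k.factorial with hc
  have hm : ∀ m : ℕ, ω ^ m ∈ ⋀[ℂ]^(2*m) W := fun m => by
    have := Submodule.pow_mem_pow _ hω m
    rwa [← pow_mul] at this
  -- the reverse of the first factor equals the second factor
  have hrev : CliffordAlgebra.reverse (Q := (0 : QuadraticForm ℂ W))
      (∑ k ∈ Finset.range (n + 1), ((Complex.I ^ k / k.factorial : ℂ)) • ω ^ k)
      = ∑ k ∈ Finset.range (n + 1), c k • ω ^ k := by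
    rw [map_sum]
    refine Finset.sum_congr rfl fun k _ => ?_
    rw [LinearMap.map_smul, revpow hω, smul_smul, hc]
    congr 1
    rw [neg_pow]
    ring
  -- expand the product
  have hprod : (∑ k ∈ Finset.range (n + 1), c k • ω ^ k) *
      (∑ k ∈ Finset.range (n + 1), c k • ω ^ k)
      = ∑ k ∈ Finset.range (n + 1), ∑ l ∈ Finset.range (n + 1),
          (c k * c l) • ω ^ (k + l) := by
    rw [Finset.sum_mul_sum]
    refine Finset.sum_congr rfl fun k _ => Finset.sum_congr rfl fun l _ => ?_
    rw [smul_mul_smul_comm, pow_add]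
  have hproj : ∀ k l : ℕ,
      GradedRing.proj (fun i : ℕ => ⋀[ℂ]^i W) (2 * n) ((c k * c l) • ω ^ (k + l))
        = if k + l = n then (c k * c l) • ω ^ n else 0 := by
    intro k l
    by_cases h : k + l = n
    · subst h
      rw [if_pos rfl, GradedRing.proj_apply]
      exact DirectSum.decompose_of_mem_same _ (Submodule.smul_mem _ _ (hm _))
    · rw [if_neg h, GradedRing.proj_apply]
      exact DirectSum.decompose_of_mem_ne _ (Submodule.smul_mem _ _ (hm (k + l)))
        (by omega)
  -- compute top
  have hcoef : (∑ k ∈ Finset.range (n + 1), c k * c (n - k))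
      = (-2 * Complex.I) ^ n / n.factorial := by
    have h1 : ∀ k ∈ Finset.range (n + 1),
        c k * c (n - k) = (-Complex.I) ^ n / n.factorial * (n.choose k : ℂ) := by
      intro k hk
      rw [Finset.mem_range] at hk
      have hk' : k ≤ n := by omega
      rw [hc]
      simp only
      rw [Nat.cast_choose ℂ hk', div_mul_div_comm, ← pow_add, Nat.add_sub_cancel' hk']
      have h2 : ((k.factorial : ℂ)) ≠ 0 := Nat.cast_ne_zero.2 (Nat.factorial_ne_zero _)
      have h3 : (((n - k).factorial : ℂ)) ≠ 0 := Nat.cast_ne_zero.2 (Nat.factorial_ne_zero _)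
      have h4 : ((n.factorial : ℂ)) ≠ 0 := Nat.cast_ne_zero.2 (Nat.factorial_ne_zero _)
      field_simp
    rw [Finset.sum_congr rfl h1, ← Finset.mul_sum]
    have h5 : (∑ k ∈ Finset.range (n + 1), (n.choose k : ℂ)) = 2 ^ n := by
      rw [← Nat.cast_sum, Nat.sum_range_choose]
      norm_num

    rw [h5, show (-2 * Complex.I) = 2 * (-Complex.I) by ring, mul_pow]
    ring
  have htop' : top = ((-2 * Complex.I) ^ n / n.factorial : ℂ) • ω ^ n := by
    rw [htop, hrev, hprod, map_sum]
    have : ∀ k ∈ Finset.range (n + 1),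
        (GradedRing.proj (fun i : ℕ => ⋀[ℂ]^i W) (2 * n))
          (∑ l ∈ Finset.range (n + 1), (c k * c l) • ω ^ (k + l))
        = (c k * c (n - k)) • ω ^ n := by
      intro k hk
      rw [Finset.mem_range] at hk
      rw [map_sum]
      rw [Finset.sum_congr rfl fun l _ => hproj k l]
      have heq : ∀ l ∈ Finset.range (n + 1),
          (if k + l = n then (c k * c l) • ω ^ n else 0)
          = if l = n - k then (c k * c l) • ω ^ n else 0 := by
        intro l _
        congr 1
        simp only [eq_iff_iff]
        omega
      rw [Finset.sum_congr rfl heq, Finset.sum_ite_eq' (Finset.range (n+1)) (n - k)]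
      rw [if_pos (Finset.mem_range.2 (by omega))]
    rw [Finset.sum_congr rfl this, ← Finset.sum_smul, hcoef]
  refine ⟨Or.inl htop', ?_⟩
  rw [htop']
  have hC : ((-2 * Complex.I) ^ n / n.factorial : ℂ) ≠ 0 := by
    apply div_ne_zero
    · apply pow_ne_zero
      simp [Complex.I_ne_zero]
    · exact_mod_cast Nat.factorial_ne_zero n
  constructor
  · intro h h0
    exact h (by rw [h0, smul_zero])
  · intro h h0
    exact h ((smul_eq_zero.mp h0).resolve_left hC)
end
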